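/- Step (1) of the virial derivation (evaluation of the time-derivative term under helical symmetry): let 𝒥 be a C¹ compactly supported covector field on ℝ³, let b, Ω ∈ ℝ, and let φ_b be the vector field φ_b(x) = (−x₂, x₁ − b, 0). Define the helical time derivative ∂_t𝒥_k := −Ω [ ∂_l(φ_b^l 𝒥_k) + 𝒥_l ∂_k φ_b^l ]. Then ∫_{ℝ³} x^k (∂_t𝒥_k) dV = −bΩ ∫_{ℝ³} 𝒥₂ dV. -/

import Mathlib

noncomputable section
open MeasureTheory Filter Topology Real

abbrev E3 := EuclideanSpace ℝ (Fin 3)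

/-- Partial derivative in the `i`-th coordinate direction. -/
noncomputable def pd (i : Fin 3) (f : E3 → ℝ) (x : E3) : ℝ :=
  fderiv ℝ f x (EuclideanSpace.single i 1)

/-- Flat Laplacian on `ℝ³`. -/
noncomputable def lap (f : E3 → ℝ) (x : E3) : ℝ := ∑ i, pd i (fun y => pd i f y) x

/-- Surface integral over the sphere of radius `r` (centered at the origin) of the outward
normal component of the vector field with components `F · i`. -/
noncomputable def flux (F : E3 → Fin 3 → ℝ) (r : ℝ) : ℝ :=
  r ^ 2 * ∫ ω : Metric.sphere (0 : E3) 1,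
      (∑ i, F (r • (ω : E3)) i * (ω : E3) i) ∂((volume : Measure E3).toSphere)

/-- Tracefree extrinsic curvature `K̂_i^j` built from lapse `a` and shift `β`. -/
noncomputable def Khat (a : E3 → ℝ) (β : E3 → Fin 3 → ℝ) (i j : Fin 3) (x : E3) : ℝ :=
  (1 / (2 * a x)) *
    (pd i (fun y => β y j) x + pd j (fun y => β y i) x
      - (2 / 3) * (if i = j then (1 : ℝ) else 0) * ∑ k, pd k (fun y => β y k) x)

/-- Double contraction `K̂_i^j K̂_j^i`. -/
noncomputable def KK (a : E3 → ℝ) (β : E3 → Fin 3 → ℝ) (x : E3) : ℝ :=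
  ∑ i, ∑ j, Khat a β i j x * Khat a β j i x
/-- The rotational vector field `φ_b(x) = (−x₂, x₁ − b, 0)` about the point `(0, b)`. -/
noncomputable def phib (b : ℝ) (x : E3) : Fin 3 → ℝ := ![-(x 1), x 0 - b, 0]

/-!
The field `φ_b` is affine with linear part `φ_0`, so `x^k ∂_k φ_b^l = φ_0^l(x) = φ_b^l + b δ^l_2`,
while the product rule gives `x^k ∂_l(φ_b^l 𝒥_k) = ∂_l(x^k φ_b^l 𝒥_k) - φ_b^k 𝒥_k`. Adding the two,
the `φ_b^k 𝒥_k` terms cancel and the integrand is `-Ω` times a divergence, plus `-bΩ 𝒥_2`. The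
divergence of a compactly supported `C¹` field integrates to zero (integration by parts against
the constant `1`).
-/

section IntegralFDeriv

variable {E G : Type*} [NormedAddCommGroup E] [NormedSpace ℝ E]
  [MeasurableSpace E] [BorelSpace E] [NormedAddCommGroup G] [NormedSpace ℝ G]
  (μ : Measure E) {g : E → G}

theorem HasCompactSupport.integrable_fderiv_apply [IsFiniteMeasureOnCompacts μ]
    (hs : HasCompactSupport g) (hg : ContDiff ℝ 1 g) (v : E) :
    Integrable (fun x => fderiv ℝ g x v) μ :=
  ((hg.continuous_fderiv one_ne_zero).clm_apply continuous_const).integrable_of_hasCompactSupport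
    (hs.fderiv_apply ℝ v)

theorem HasCompactSupport.integral_fderiv_apply_eq_zero [FiniteDimensional ℝ E]
    [μ.IsAddHaarMeasure] (hs : HasCompactSupport g) (hg : ContDiff ℝ 1 g) (v : E) :
    ∫ x, fderiv ℝ g x v ∂μ = 0 := by
  simpa using integral_smul_fderiv_eq_neg_fderiv_smul_of_integrable (μ := μ)
    (f := fun _ => (1 : ℝ)) (v := v) (by simp) (by simpa using hs.integrable_fderiv_apply μ hg v)
    (by simpa using hg.continuous.integrable_of_hasCompactSupport hs)
    (fun x _ => differentiableAt_const _) (fun x _ => hg.differentiable one_ne_zero x)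

end IntegralFDeriv

theorem fderiv_coord_apply {ι : Type*} [Fintype ι] (j : ι) (x v : EuclideanSpace ℝ ι) :
    fderiv ℝ (fun y : EuclideanSpace ℝ ι => y j) x v = v j :=
  congrArg (· v) (EuclideanSpace.proj (𝕜 := ℝ) j).fderiv

theorem pd_coord (i j : Fin 3) (x : E3) : pd i (fun y => y j) x = if j = i then 1 else 0 := by
  simp [pd, fderiv_coord_apply, PiLp.single_apply]

theorem pd_mul {f g : E3 → ℝ} {x : E3} (hf : DifferentiableAt ℝ f x)
    (hg : DifferentiableAt ℝ g x) (i : Fin 3) :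
    pd i (fun y => f y * g y) x = f x * pd i g x + g x * pd i f x := by
  simp [pd, fderiv_fun_mul hf hg]

theorem contDiff_phib (b : ℝ) (l : Fin 3) {n : WithTop ℕ∞} :
    ContDiff ℝ n fun y => phib b y l := by
  fin_cases l <;>
    simp only [phib, Fin.zero_eta, Fin.mk_one, Fin.reduceFinMk, Matrix.cons_val] <;> fun_prop

theorem sum_coord_mul_pd_phib (b : ℝ) (l : Fin 3) (x : E3) :
    ∑ k, x k * pd k (fun y => phib b y l) x = phib b x l + if l = 1 then b else 0 := by
  fin_cases l <;> simp [phib, pd, fderiv_sub_const, fderiv_coord_apply]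

theorem coord_mul_pd {F : E3 → ℝ} {x : E3} (hF : DifferentiableAt ℝ F x) (k l : Fin 3) :
    x k * pd l F x = pd l (fun y => y k * F y) x - if k = l then F x else 0 := by
  rw [pd_mul (f := fun y : E3 => y k) (by fun_prop) hF, pd_coord]
  split_ifs <;> ring

theorem sum_coord_mul_helicalDeriv_eq (𝒥 : E3 → Fin 3 → ℝ) (b Ω : ℝ)
    (h𝒥 : ∀ k, Differentiable ℝ fun x => 𝒥 x k) (x : E3) :
    ∑ k, x k *
        (-Ω * ((∑ l, pd l (fun y => phib b y l * 𝒥 y k) x)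
          + ∑ l, 𝒥 x l * pd k (fun y => phib b y l) x))
      = -Ω * ∑ k, ∑ l, pd l (fun y => y k * (phib b y l * 𝒥 y k)) x
          + -(b * Ω) * 𝒥 x 1 := by
  have hφ𝒥 : ∀ k l, DifferentiableAt ℝ (fun y => phib b y l * 𝒥 y k) x := fun k l =>
    ((contDiff_phib b l).differentiable one_ne_zero x).mul (h𝒥 k x)
  have hdiv : ∑ k, ∑ l, x k * pd l (fun y => phib b y l * 𝒥 y k) x
      = ∑ k, ∑ l, pd l (fun y => y k * (phib b y l * 𝒥 y k)) x - ∑ k, phib b x k * 𝒥 x k := by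
    simp only [coord_mul_pd (hφ𝒥 _ _), Finset.sum_sub_distrib, Finset.sum_ite_eq,
      Finset.mem_univ, if_true]
  have hrot : ∑ k, x k * ∑ l, 𝒥 x l * pd k (fun y => phib b y l) x
      = ∑ k, phib b x k * 𝒥 x k + b * 𝒥 x 1 := by
    simp only [Finset.mul_sum]
    rw [Finset.sum_comm]
    simp only [mul_left_comm (x _), ← Finset.mul_sum, sum_coord_mul_pd_phib]
    simp only [mul_add, mul_ite, mul_zero, Finset.sum_add_distrib, Finset.sum_ite_eq',
      Finset.mem_univ, if_true]
    simp only [mul_comm]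
  calc _ = -Ω * (∑ k, ∑ l, x k * pd l (fun y => phib b y l * 𝒥 y k) x
          + ∑ k, x k * ∑ l, 𝒥 x l * pd k (fun y => phib b y l) x) := by
        rw [mul_add, Finset.mul_sum, Finset.mul_sum, ← Finset.sum_add_distrib]
        refine Finset.sum_congr rfl fun k _ => ?_
        rw [← Finset.mul_sum]
        ring
    _ = _ := by rw [hdiv, hrot]; ring

/-- Step (1) of the virial derivation: for a C¹ compactly supported covector field 𝒥 and the
helical time derivative `∂_t𝒥_k = −Ω[∂_l(φ_b^l 𝒥_k) + 𝒥_l ∂_k φ_b^l]`,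
`∫ x^k ∂_t𝒥_k dV = −bΩ ∫ 𝒥₂ dV`. -/
theorem virial_step1
    (𝒥 : E3 → Fin 3 → ℝ) (b Ω : ℝ)
    (h𝒥C : ∀ k, ContDiff ℝ 1 fun x => 𝒥 x k)
    (h𝒥supp : ∀ k, HasCompactSupport fun x => 𝒥 x k) :
    (∫ x : E3, ∑ k, x k *
        (-Ω * ((∑ l, pd l (fun y => phib b y l * 𝒥 y k) x)
          + ∑ l, 𝒥 x l * pd k (fun y => phib b y l) x)))
      = -(b * Ω) * ∫ x : E3, 𝒥 x 1 := by
  set G : Fin 3 → Fin 3 → E3 → ℝ := fun k l y => y k * (phib b y l * 𝒥 y k)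
  have hG : ∀ k l, ContDiff ℝ 1 (G k l) := fun k l =>
    (EuclideanSpace.proj k).contDiff.mul ((contDiff_phib b l).mul (h𝒥C k))
  have hGsupp : ∀ k l, HasCompactSupport (G k l) := fun k l => (h𝒥supp k).mul_left.mul_left
  have hint : ∀ k l, Integrable fun x => pd l (G k l) x := fun k l =>
    (hGsupp k l).integrable_fderiv_apply volume (hG k l) _
  have hdiv : ∫ x, ∑ k, ∑ l, pd l (G k l) x = 0 := by
    rw [integral_finsetSum _ fun k _ => integrable_finsetSum _ fun l _ => hint k l]
    refine Finset.sum_eq_zero fun k _ => ?_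
    rw [integral_finsetSum _ fun l _ => hint k l]
    exact Finset.sum_eq_zero fun l _ =>
      (hGsupp k l).integral_fderiv_apply_eq_zero volume (hG k l) _
  simp only [sum_coord_mul_helicalDeriv_eq 𝒥 b Ω fun k => (h𝒥C k).differentiable one_ne_zero]
  rw [integral_add ((integrable_finsetSum _ fun k _ => integrable_finsetSum _ fun l _ =>
      hint k l).const_mul _) (((h𝒥C 1).continuous.integrable_of_hasCompactSupport
      (h𝒥supp 1)).const_mul _), integral_const_mul, integral_const_mul, hdiv, mul_zero, zero_add]
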